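/- arXiv:1910.05093 — 5 statements merged into one kernel-verified Lean document; each statement's English description precedes it below -/
import Mathlib

section
/- Let H > 0 and let (F_k)_{k≥0} be a sequence of nonnegative reals satisfying F_{k+1}² ≤ H·(F_k − F_{k+1})·F_k for all k. Then there exists ω ∈ (0,1), namely ω = 2H/(√(H²+4H)+H), such that F_{k+1} ≤ ω·F_k for all k; hence F_k ≤ ω^k·F_0. -/
/-- If a nonnegative sequence satisfies `F_{k+1}² ≤ H (F_k − F_{k+1}) F_k`, then with
`ω = 2H/(√(H²+4H)+H) ∈ (0,1)` one has `F_{k+1} ≤ ω F_k` and hence `F_k ≤ ω^k F_0`. -/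
theorem stmt_3 (H : ℝ) (hH : 0 < H) (F : ℕ → ℝ) (hF : ∀ k, 0 ≤ F k)
    (hrec : ∀ k, (F (k + 1)) ^ 2 ≤ H * (F k - F (k + 1)) * F k) :
    ∃ ω : ℝ, ω = 2 * H / (Real.sqrt (H ^ 2 + 4 * H) + H) ∧ 0 < ω ∧ ω < 1 ∧
      (∀ k, F (k + 1) ≤ ω * F k) ∧ (∀ k, F k ≤ ω ^ k * F 0) := by
  set s := Real.sqrt (H ^ 2 + 4 * H) with hsdef
  have hs0 : 0 ≤ s := Real.sqrt_nonneg _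
  have hs2 : s ^ 2 = H ^ 2 + 4 * H := Real.sq_sqrt (by nlinarith)
  have hsH : H < s := by nlinarith
  have hωeq : 2 * H / (s + H) = (s - H) / 2 := by
    rw [div_eq_div_iff (by linarith) (by norm_num)]
    nlinarith
  set ω := (s - H) / 2 with hωdef
  have hω0 : 0 < ω := by rw [hωdef]; linarith
  have hkey : ω ^ 2 + H * ω = H := by rw [hωdef]; nlinarith
  have hω1 : ω < 1 := by nlinarith
  have hstep : ∀ k, F (k + 1) ≤ ω * F k := by
    intro k
    by_contra h
    push_neg at h
    have hFk : 0 ≤ F k := hF k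
    have hF1 : 0 < F (k + 1) := lt_of_le_of_lt (by positivity) h
    have h2 := hrec k
    nlinarith [hkey, sq_nonneg (F k), mul_self_lt_mul_self (mul_nonneg hω0.le hFk) h, mul_le_mul_of_nonneg_left h.le (mul_nonneg hH.le hFk)]
  refine ⟨ω, hωeq.symm, hω0, hω1, hstep, ?_⟩
  intro k
  induction k with
  | zero => simp
  | succ n ih =>
    calc F (n + 1) ≤ ω * F n := hstep n
      _ ≤ ω * (ω ^ n * F 0) := by
          exact mul_le_mul_of_nonneg_left ih hω0.le
      _ = ω ^ (n + 1) * F 0 := by ring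
end

section
/- Let R > 0 and let (F_k)_{k≥0} be a nonincreasing sequence of nonnegative reals satisfying F_{k+1}² ≤ R·(F_k − F_{k+1}) for all k. Then F_k ≤ 2·max{F_1, R}/k for all k ≥ 1; in particular F_k = O(1/k). -/
/-- Beck–Shtern type recursion lemma: if `(F_k)` is nonincreasing, nonnegative, and
`F_{k+1}² ≤ R (F_k − F_{k+1})` with `R > 0`, then `F_k ≤ 2 max{F_1, R} / k` for `k ≥ 1`;
in particular `F_k = O(1/k)`. -/
theorem stmt_4 (R : ℝ) (hR : 0 < R) (F : ℕ → ℝ) (hF : ∀ k, 0 ≤ F k)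
    (hmono : ∀ k, F (k + 1) ≤ F k)
    (hrec : ∀ k, (F (k + 1)) ^ 2 ≤ R * (F k - F (k + 1))) :
    ∀ k : ℕ, 1 ≤ k → F k ≤ 2 * max (F 1) R / k := by
  set M := max (F 1) R with hMdef
  have hRM : R ≤ M := le_max_right _ _
  have hF1M : F 1 ≤ M := le_max_left _ _
  have hMpos : 0 < M := lt_of_lt_of_le hR hRM
  intro k hk
  induction k, hk using Nat.le_induction with
  | base =>
    simp only [Nat.cast_one, div_one]
    linarith
  | succ n hn ih =>
    by_contra h
    push_neg at h
    have hn1 : (1 : ℝ) ≤ (n : ℝ) := by exact_mod_cast hn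
    have hnpos : (0 : ℝ) < (n : ℝ) := by linarith
    have hn1pos : (0 : ℝ) < (n : ℝ) + 1 := by linarith
    have hrecn := hrec n
    have hFn : F n ≤ 2 * M / n := ih
    have hcast : ((n + 1 : ℕ) : ℝ) = (n : ℝ) + 1 := by push_cast; ring
    rw [hcast] at h
    -- F(n+1)^2 + R * F(n+1) ≤ R * F n ≤ 2 M R / n
    have h1 : F (n + 1) ^ 2 + R * F (n + 1) ≤ R * (2 * M / n) := by
      nlinarith [hrec n]
    have ha : 2 * M / ((n : ℝ) + 1) < F (n + 1) := h
    have hapos : 0 < 2 * M / ((n : ℝ) + 1) := by positivity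
    have h2 : (2 * M / ((n : ℝ) + 1)) ^ 2 + R * (2 * M / ((n : ℝ) + 1))
        < F (n + 1) ^ 2 + R * F (n + 1) := by
      have := mul_pos hR hapos
      nlinarith [mul_nonneg (mul_nonneg hMpos.le (sub_nonneg.2 hRM)) hnpos.le, mul_nonneg (mul_nonneg hMpos.le hR.le) (sub_nonneg.2 hn1)]
    have h3 : R * (2 * M / n) ≤ (2 * M / ((n : ℝ) + 1)) ^ 2 + R * (2 * M / ((n : ℝ) + 1)) := by
      rw [div_pow]
      rw [← sub_nonneg]
      have key : (2 * M) ^ 2 / ((n : ℝ) + 1) ^ 2 + R * (2 * M / ((n : ℝ) + 1)) - R * (2 * M / n)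
          = (4 * M ^ 2 * n - 2 * M * R * ((n : ℝ) + 1)) / (((n : ℝ) + 1) ^ 2 * n) := by
        field_simp
        ring
      rw [key]
      apply div_nonneg _ (by positivity)
      nlinarith [mul_nonneg (mul_nonneg hMpos.le (sub_nonneg.2 hRM)) hnpos.le, mul_nonneg (mul_nonneg hMpos.le hR.le) (sub_nonneg.2 hn1)]
    linarith
end

section
/- Let L_1,…,L_m > 0 with L = Σ_i L_i, and let ∇f_i : ℝⁿ → ℝⁿ be L_i-Lipschitz. Suppose x^{k−τ}, …, x^k, x^{k+1} ∈ ℝⁿ and each delay satisfies 0 ≤ τ_{i} ≤ τ. Then ⟨Σ_{i=1}^m (∇f_i(x^k) − ∇f_i(x^{k−τ_i})), x^{k+1} − x^k⟩ ≤ (L/(2ε))·Σ_{d=k−τ}^{k−1} ‖x^{d+1} − x^d‖² + (τ ε L/2)·‖x^{k+1} − x^k‖² for every ε > 0. -/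
open scoped RealInnerProductSpace BigOperators

lemma telescope_norm (n : ℕ) (x : ℤ → EuclideanSpace ℝ (Fin n)) (k : ℤ) :
    ∀ t : ℕ, ‖x k - x (k - (t : ℤ))‖ ≤ ∑ d ∈ Finset.Icc (k - (t : ℤ)) (k - 1), ‖x (d + 1) - x d‖ := by
  intro t
  induction t with
  | zero => simp
  | succ t ih =>
    have hle : k - ((t : ℤ) + 1) ≤ k - 1 := by omega
    have hins : Finset.Icc (k - ((t:ℤ)+1)) (k - 1)
        = insert (k - ((t:ℤ)+1)) (Finset.Icc (k - (t:ℤ)) (k - 1)) := by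
      ext y
      simp only [Finset.mem_Icc, Finset.mem_insert]
      omega
    rw [show ((t+1 : ℕ) : ℤ) = (t:ℤ)+1 by push_cast; ring, hins,
      Finset.sum_insert (by simp only [Finset.mem_Icc]; omega)]
    have h1 : x k - x (k - ((t:ℤ)+1))
        = (x (k - ((t:ℤ)+1) + 1) - x (k - ((t:ℤ)+1))) + (x k - x (k - (t:ℤ))) := by
      have : k - ((t:ℤ)+1) + 1 = k - (t:ℤ) := by omega
      rw [this]; abel
    calc ‖x k - x (k - ((t:ℤ)+1))‖
        ≤ ‖x (k - ((t:ℤ)+1) + 1) - x (k - ((t:ℤ)+1))‖ + ‖x k - x (k - (t:ℤ))‖ := by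
          rw [h1]; exact norm_add_le _ _
      _ ≤ _ := by gcongr

/-- Bound on the delayed-gradient cross term: if each `∇f_i` is `L_i`-Lipschitz with
`L = ∑ L_i`, and the delays satisfy `τ_i ≤ τ`, then for every `ε > 0`
`⟪∑_i (∇f_i(x^k) − ∇f_i(x^{k−τ_i})), x^{k+1} − x^k⟫
  ≤ (L/(2ε)) ∑_{d=k−τ}^{k−1} ‖x^{d+1}−x^d‖² + (τεL/2) ‖x^{k+1}−x^k‖²`. -/
theorem stmt_5 (n m : ℕ) (L : Fin m → ℝ) (hL : ∀ i, 0 < L i)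
    (gf : Fin m → EuclideanSpace ℝ (Fin n) → EuclideanSpace ℝ (Fin n))
    (hlip : ∀ i, ∀ a b : EuclideanSpace ℝ (Fin n), ‖gf i a - gf i b‖ ≤ L i * ‖a - b‖)
    (x : ℤ → EuclideanSpace ℝ (Fin n)) (k : ℤ) (τ : ℕ) (τi : Fin m → ℕ)
    (hdel : ∀ i, τi i ≤ τ) (ε : ℝ) (hε : 0 < ε) :
    ⟪∑ i, (gf i (x k) - gf i (x (k - (τi i : ℤ)))), x (k + 1) - x k⟫ ≤
      ((∑ i, L i) / (2 * ε)) * ∑ d ∈ Finset.Icc (k - (τ : ℤ)) (k - 1), ‖x (d + 1) - x d‖ ^ 2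
      + ((τ : ℝ) * ε * (∑ i, L i) / 2) * ‖x (k + 1) - x k‖ ^ 2 := by
  set S := ∑ d ∈ Finset.Icc (k - (τ : ℤ)) (k - 1), ‖x (d + 1) - x d‖ with hS
  set B := ‖x (k + 1) - x k‖ with hB
  have hLsum : (0:ℝ) ≤ ∑ i, L i := Finset.sum_nonneg fun i _ => (hL i).le
  -- each term bounded
  have hterm : ∀ i : Fin m, ‖gf i (x k) - gf i (x (k - (τi i : ℤ)))‖ ≤ L i * S := by
    intro i
    refine (hlip i _ _).trans ?_
    gcongr
    · exact (hL i).le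
    refine (telescope_norm n x k (τi i)).trans ?_
    apply Finset.sum_le_sum_of_subset_of_nonneg
    · apply Finset.Icc_subset_Icc_left; have := hdel i; omega
    · intros; positivity
  have h0 : ⟪∑ i, (gf i (x k) - gf i (x (k - (τi i : ℤ)))), x (k + 1) - x k⟫
      ≤ (∑ i, L i) * S * B := by
    calc ⟪∑ i, (gf i (x k) - gf i (x (k - (τi i : ℤ)))), x (k + 1) - x k⟫
        ≤ ‖∑ i, (gf i (x k) - gf i (x (k - (τi i : ℤ))))‖ * B := real_inner_le_norm _ _
      _ ≤ (∑ i, ‖gf i (x k) - gf i (x (k - (τi i : ℤ)))‖) * B :=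
          mul_le_mul_of_nonneg_right (norm_sum_le _ _) (norm_nonneg _)
      _ ≤ (∑ i, L i * S) * B :=
          mul_le_mul_of_nonneg_right (Finset.sum_le_sum fun i _ => hterm i) (norm_nonneg _)
      _ = (∑ i, L i) * S * B := by rw [← Finset.sum_mul]
  refine h0.trans ?_
  -- pointwise AM-GM over Icc
  have hcard : (Finset.Icc (k - (τ : ℤ)) (k - 1)).card = τ := by
    rw [Int.card_Icc]; omega
  have key : S * B ≤ (1/(2*ε)) * (∑ d ∈ Finset.Icc (k - (τ : ℤ)) (k - 1), ‖x (d + 1) - x d‖ ^ 2)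
      + (τ : ℝ) * (ε / 2) * B ^ 2 := by
    have h1 : S * B = ∑ d ∈ Finset.Icc (k - (τ : ℤ)) (k - 1), ‖x (d + 1) - x d‖ * B := by
      rw [hS, Finset.sum_mul]
    rw [h1]
    calc ∑ d ∈ Finset.Icc (k - (τ : ℤ)) (k - 1), ‖x (d + 1) - x d‖ * B
        ≤ ∑ d ∈ Finset.Icc (k - (τ : ℤ)) (k - 1), (‖x (d + 1) - x d‖ ^ 2 / (2*ε) + ε/2 * B ^ 2) := by
          apply Finset.sum_le_sum
          intro d _
          rw [div_add' _ _ _ (by positivity), le_div_iff₀ (by positivity)]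
          nlinarith [sq_nonneg (‖x (d+1) - x d‖ - ε * B), hε, norm_nonneg (x (d+1) - x d)]
      _ = _ := by
          rw [Finset.sum_add_distrib, ← Finset.sum_div, Finset.sum_const, hcard, nsmul_eq_mul]
          ring
  calc (∑ i, L i) * S * B = (∑ i, L i) * (S * B) := by ring
    _ ≤ (∑ i, L i) * ((1/(2*ε)) * (∑ d ∈ Finset.Icc (k - (τ : ℤ)) (k - 1), ‖x (d + 1) - x d‖ ^ 2)
        + (τ : ℝ) * (ε / 2) * B ^ 2) := by gcongr
    _ = _ := by ring
end

section
/- Let f : ℝⁿ → ℝ be differentiable with L-Lipschitz gradient, g : ℝⁿ → ℝ proper (possibly nonconvex), γ > 0, v ∈ ℝⁿ, and let x⁺ minimize y ↦ (1/2)‖x − γv − y‖² + γ g(y). Then F(x⁺) − F(x) ≤ ⟨∇f(x) − v, x⁺ − x⟩ + (L/2 − 1/(2γ))‖x⁺ − x‖², where F = f + g. -/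
/-!
Comparing the proximal objective at `x⁺` with its value at `y = x` gives
`g x⁺ - g x ≤ -⟪v, x⁺ - x⟫ - ‖x⁺ - x‖² / (2γ)`, and the descent lemma for the `L`-smooth `f`
gives `f x⁺ - f x ≤ ⟪∇f x, x⁺ - x⟫ + (L/2) ‖x⁺ - x‖²`; the claim is their sum.
The descent lemma holds because `t ↦ f (x + t d) - t ⟪∇f x, d⟫ - (L/2) t² ‖d‖²` has derivative
`⟪∇f (x + t d) - ∇f x, d⟫ - L t ‖d‖² ≤ 0` on `[0, 1]`.
-/

open scoped RealInnerProductSpace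

open Set

variable {E : Type*} [NormedAddCommGroup E] [InnerProductSpace ℝ E]

theorem sub_le_neg_inner_sub_sq_of_prox_min {g : E → ℝ} {γ : ℝ} (hγ : 0 < γ) {x v xp : E}
    (hprox : ∀ y, 1 / 2 * ‖x - γ • v - xp‖ ^ 2 + γ * g xp ≤ 1 / 2 * ‖x - γ • v - y‖ ^ 2 + γ * g y) :
    g xp - g x ≤ -⟪v, xp - x⟫ - 1 / (2 * γ) * ‖xp - x‖ ^ 2 := by
  have hx := hprox x
  rw [show x - γ • v - xp = -((xp - x) + γ • v) by abel, show x - γ • v - x = -(γ • v) by abel,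
    norm_neg, norm_neg, norm_add_sq_real, real_inner_smul_right, real_inner_comm] at hx
  have hγ_half : γ * (1 / (2 * γ)) = 1 / 2 := by field_simp
  refine le_of_mul_le_mul_left ?_ hγ
  rw [mul_sub, mul_sub, ← mul_assoc, hγ_half]
  linarith

variable [CompleteSpace E]

theorem HasGradientAt.hasDerivAt_add_smul {f : E → ℝ} {f' x d : E} {t : ℝ}
    (hf : HasGradientAt f f' (x + t • d)) :
    HasDerivAt (fun s : ℝ => f (x + s • d)) ⟪f', d⟫ t := by
  have hline : HasDerivAt (fun s : ℝ => x + s • d) d t := by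
    simpa using ((hasDerivAt_id t).smul_const d).const_add x
  exact hf.hasFDerivAt.comp_hasDerivAt t hline

theorem le_add_inner_add_sq_of_lipschitz_gradient {f : E → ℝ} {f' : E → E}
    (hf : ∀ z, HasGradientAt f (f' z) z) {L : ℝ}
    (hlip : ∀ a b, ‖f' a - f' b‖ ≤ L * ‖a - b‖) (x y : E) :
    f y ≤ f x + ⟪f' x, y - x⟫ + L / 2 * ‖y - x‖ ^ 2 := by
  set d := y - x
  let φ : ℝ → ℝ := fun t => f (x + t • d) - t * ⟪f' x, d⟫ - L / 2 * t ^ 2 * ‖d‖ ^ 2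
  have hφ : ∀ t, HasDerivAt φ (⟪f' (x + t • d), d⟫ - ⟪f' x, d⟫ - L * t * ‖d‖ ^ 2) t := by
    intro t
    have := (((hf (x + t • d)).hasDerivAt_add_smul).sub
      ((hasDerivAt_id t).mul_const ⟪f' x, d⟫)).sub
      (((hasDerivAt_pow 2 t).const_mul (L / 2)).mul_const (‖d‖ ^ 2))
    exact this.congr_deriv (by push_cast; ring)
  have hφ'_nonpos : ∀ t ∈ interior (Icc (0 : ℝ) 1),
      ⟪f' (x + t • d), d⟫ - ⟪f' x, d⟫ - L * t * ‖d‖ ^ 2 ≤ 0 := by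
    intro t ht
    rw [interior_Icc] at ht
    have hgrad : ‖f' (x + t • d) - f' x‖ ≤ L * (t * ‖d‖) := by
      simpa [norm_smul, abs_of_pos ht.1] using hlip (x + t • d) x
    calc ⟪f' (x + t • d), d⟫ - ⟪f' x, d⟫ - L * t * ‖d‖ ^ 2
        = ⟪f' (x + t • d) - f' x, d⟫ - L * t * ‖d‖ ^ 2 := by rw [inner_sub_left]
      _ ≤ ‖f' (x + t • d) - f' x‖ * ‖d‖ - L * t * ‖d‖ ^ 2 := by
          gcongr; exact real_inner_le_norm _ _
      _ ≤ L * (t * ‖d‖) * ‖d‖ - L * t * ‖d‖ ^ 2 := by gcongr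
      _ = 0 := by ring
  have hanti : AntitoneOn φ (Icc 0 1) :=
    antitoneOn_of_hasDerivWithinAt_nonpos (convex_Icc 0 1)
      (fun t _ => (hφ t).continuousAt.continuousWithinAt)
      (fun t _ => (hφ t).hasDerivWithinAt) hφ'_nonpos
  have hφ_one_le_zero : φ 1 ≤ φ 0 :=
    hanti (left_mem_Icc.2 zero_le_one) (right_mem_Icc.2 zero_le_one) zero_le_one
  simp only [φ, d, one_smul, zero_smul, add_zero, add_sub_cancel] at hφ_one_le_zero
  linarith

theorem stmt_9_general (n : ℕ) (f : EuclideanSpace ℝ (Fin n) → ℝ)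
    (f' : EuclideanSpace ℝ (Fin n) → EuclideanSpace ℝ (Fin n))
    (hf : ∀ z, HasGradientAt f (f' z) z) (L : ℝ)
    (hlip : ∀ a b : EuclideanSpace ℝ (Fin n), ‖f' a - f' b‖ ≤ L * ‖a - b‖)
    (g : EuclideanSpace ℝ (Fin n) → ℝ)
    (γ : ℝ) (hγ : 0 < γ) (x v xp : EuclideanSpace ℝ (Fin n))
    (hprox : ∀ y : EuclideanSpace ℝ (Fin n),
      (1 / 2) * ‖x - γ • v - xp‖ ^ 2 + γ * g xp ≤ (1 / 2) * ‖x - γ • v - y‖ ^ 2 + γ * g y) :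
    (f xp + g xp) - (f x + g x) ≤ ⟪f' x - v, xp - x⟫ + (L / 2 - 1 / (2 * γ)) * ‖xp - x‖ ^ 2 := by
  have hf_step := le_add_inner_add_sq_of_lipschitz_gradient hf hlip x xp
  have hg_step := sub_le_neg_inner_sub_sq_of_prox_min hγ hprox
  rw [inner_sub_left]
  linarith

/-- Descent inequality for the proximal step, nonconvex `g`: if `∇f` is `L`-Lipschitz and
`x⁺` minimizes `y ↦ (1/2)‖x − γv − y‖² + γ g(y)`, then with `F = f + g`,
`F(x⁺) − F(x) ≤ ⟪∇f(x) − v, x⁺ − x⟫ + (L/2 − 1/(2γ))‖x⁺ − x‖²`. -/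
theorem stmt_9 (n : ℕ) (f : EuclideanSpace ℝ (Fin n) → ℝ)
    (f' : EuclideanSpace ℝ (Fin n) → EuclideanSpace ℝ (Fin n))
    (hf : ∀ z, HasGradientAt f (f' z) z) (L : ℝ) (hL : 0 < L)
    (hlip : ∀ a b : EuclideanSpace ℝ (Fin n), ‖f' a - f' b‖ ≤ L * ‖a - b‖)
    (g : EuclideanSpace ℝ (Fin n) → ℝ)
    (γ : ℝ) (hγ : 0 < γ) (x v xp : EuclideanSpace ℝ (Fin n))
    (hprox : ∀ y : EuclideanSpace ℝ (Fin n),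
      (1 / 2) * ‖x - γ • v - xp‖ ^ 2 + γ * g xp ≤ (1 / 2) * ‖x - γ • v - y‖ ^ 2 + γ * g y) :
    (f xp + g xp) - (f x + g x) ≤ ⟪f' x - v, xp - x⟫ + (L / 2 - 1 / (2 * γ)) * ‖xp - x‖ ^ 2 :=
  stmt_9_general n f f' hf L hlip g γ hγ x v xp hprox
end

section
/- Let f = Σ_{i=1}^m f_i with each ∇f_i being L_i-Lipschitz, L = Σ L_i. Let g be convex, γ > 0, v ∈ ℝⁿ, x⁺ = prox_{γg}(x − γv), and let x̄ be any minimizer of F = f + g. Suppose the delayed points satisfy ‖x⁺ − x^{k−τ_i}‖ ≤ Σ_{d=k−τ}^{k} ‖Δ^d‖ for each i, where Δ^k = x⁺ − x. Then F(x⁺) − F(x̄) ≤ L·(Σ_{d=k−τ}^{k} ‖Δ^d‖)·‖x⁺ − x̄‖ + (1/γ)‖Δ^k‖·‖x⁺ − x̄‖ + ⟨Σ_i ∇f_i(x^{k−τ_i}) − v, x⁺ − x̄⟩, assuming f is convex. -/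
/-!
Write `p = x^{k+1}` and `e = p - x̄`. Convexity of `f` gives `f p - f x̄ ≤ ⟪∑ ∇f_i(p), e⟫`, and the
optimality of the proximal step gives `γ (g p - g x̄) ≤ ⟪x^k - γ v - p, e⟫`. Adding the two, it
remains to replace `∑ ∇f_i(p)` by the delayed sum `∑ ∇f_i(x^{k-τ_i})`; by Lipschitz continuity the
error is at most `∑ L_i ‖p - x^{k-τ_i}‖ ≤ L ∑_d ‖Δ^d‖` in norm.
-/

open Set Filter Topology
open scoped RealInnerProductSpace

theorem norm_sum_sub_sum_le_of_lipschitz {E F : Type*} [SeminormedAddCommGroup E]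
    [SeminormedAddCommGroup F] {ι : Type*} {s : Finset ι} {G : ι → E → F}
    {L : ι → ℝ} (hL : ∀ i ∈ s, 0 ≤ L i) (hG : ∀ i ∈ s, ∀ a b, ‖G i a - G i b‖ ≤ L i * ‖a - b‖)
    {p : E} {q : ι → E} {r : ℝ} (hq : ∀ i ∈ s, ‖p - q i‖ ≤ r) :
    ‖∑ i ∈ s, G i p - ∑ i ∈ s, G i (q i)‖ ≤ (∑ i ∈ s, L i) * r := by
  rw [← Finset.sum_sub_distrib, Finset.sum_mul]
  refine (norm_sum_le _ _).trans (Finset.sum_le_sum fun i hi => ?_)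
  exact (hG i hi p (q i)).trans (mul_le_mul_of_nonneg_left (hq i hi) (hL i hi))

section

variable {E : Type*} [NormedAddCommGroup E] [InnerProductSpace ℝ E]

theorem HasGradientAt.fun_sum [CompleteSpace E] {ι : Type*} {s : Finset ι} {F : ι → E → ℝ}
    {G : ι → E} {x : E} (h : ∀ i ∈ s, HasGradientAt (F i) (G i) x) :
    HasGradientAt (fun z => ∑ i ∈ s, F i z) (∑ i ∈ s, G i) x := by
  rw [hasGradientAt_iff_hasFDerivAt, map_sum]
  exact HasFDerivAt.fun_sum fun i hi => (h i hi).hasFDerivAt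

theorem ConvexOn.sub_le_inner_of_hasGradientAt [CompleteSpace E] {F : E → ℝ} {G x : E}
    (hF : ConvexOn ℝ univ F) (hG : HasGradientAt F G x) (y : E) :
    F x - F y ≤ ⟪G, x - y⟫ := by
  have hφ : ConvexOn ℝ univ (F ∘ AffineMap.lineMap (k := ℝ) x y) :=
    hF.comp_affineMap (AffineMap.lineMap x y)
  have hderiv : HasDerivAt (F ∘ AffineMap.lineMap (k := ℝ) x y) ⟪G, y - x⟫ 0 := by
    have hG' : HasFDerivAt F (InnerProductSpace.toDual ℝ E G) (AffineMap.lineMap x y (0 : ℝ)) := by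
      simpa using hG.hasFDerivAt
    simpa using hG'.comp_hasDerivAt (0 : ℝ) AffineMap.hasDerivAt_lineMap
  have hslope : ⟪G, y - x⟫ ≤ F y - F x := by
    simpa [slope_def_field] using
      hφ.le_slope_of_hasDerivAt (mem_univ 0) (mem_univ 1) one_pos hderiv
  rw [← neg_sub y x, inner_neg_right]
  linarith

/-- The variational inequality of the proximal step: `(w - p) / γ` is a subgradient of `g` at
`p = prox_{γ g}(w)`. -/
theorem ConvexOn.inner_sub_le_of_isMinOn_prox {g : E → ℝ} (hg : ConvexOn ℝ univ g) {γ : ℝ}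
    (hγ : 0 ≤ γ) {w p : E} (hp : IsMinOn (fun y => (1 / 2) * ‖w - y‖ ^ 2 + γ * g y) univ p)
    (y : E) : ⟪w - p, y - p⟫ ≤ γ * (g y - g p) := by
  have hsmall : ∀ t ∈ Ioc (0 : ℝ) 1,
      ⟪w - p, y - p⟫ ≤ γ * (g y - g p) + t / 2 * ‖y - p‖ ^ 2 := by
    rintro t ⟨ht0, ht1⟩
    have hmin := hp (mem_univ (p + t • (y - p)))
    have hconv : g (p + t • (y - p)) ≤ (1 - t) * g p + t * g y :=
      calc g (p + t • (y - p)) = g ((1 - t) • p + t • y) := by congr 1; module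
        _ ≤ (1 - t) • g p + t • g y :=
          hg.2 (mem_univ p) (mem_univ y) (sub_nonneg.2 ht1) ht0.le (by ring)
    have hnorm : ‖w - (p + t • (y - p))‖ ^ 2
        = ‖w - p‖ ^ 2 - 2 * t * ⟪w - p, y - p⟫ + t ^ 2 * ‖y - p‖ ^ 2 := by
      rw [sub_add_eq_sub_sub, norm_sub_sq_real, real_inner_smul_right, norm_smul,
        Real.norm_of_nonneg ht0.le]
      ring
    simp only [mem_ofPred_eq, hnorm] at hmin
    refine le_of_mul_le_mul_left ?_ ht0
    nlinarith [mul_le_mul_of_nonneg_left hconv hγ]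
  have hlim : Tendsto (fun t : ℝ => γ * (g y - g p) + t / 2 * ‖y - p‖ ^ 2) (𝓝[>] 0)
      (𝓝 (γ * (g y - g p))) := by
    refine tendsto_nhdsWithin_of_tendsto_nhds (Continuous.tendsto' ?_ 0 _ ?_)
    · fun_prop
    · simp
  exact ge_of_tendsto hlim (eventually_of_mem (Ioc_mem_nhdsGT one_pos) hsmall)

end

theorem stmt_13_general (n m : ℕ) (f : Fin m → EuclideanSpace ℝ (Fin n) → ℝ)
    (gf : Fin m → EuclideanSpace ℝ (Fin n) → EuclideanSpace ℝ (Fin n))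
    (hgrad : ∀ i z, HasGradientAt (f i) (gf i z) z)
    (L : Fin m → ℝ) (hL : ∀ i, 0 < L i)
    (hlip : ∀ i, ∀ a b : EuclideanSpace ℝ (Fin n), ‖gf i a - gf i b‖ ≤ L i * ‖a - b‖)
    (hfconv : ConvexOn ℝ Set.univ (fun z => ∑ i, f i z))
    (g : EuclideanSpace ℝ (Fin n) → ℝ) (hgconv : ConvexOn ℝ Set.univ g)
    (γ : ℝ) (hγ : 0 < γ) (v : EuclideanSpace ℝ (Fin n))
    (x : ℤ → EuclideanSpace ℝ (Fin n)) (k : ℤ) (τ : ℕ) (τi : Fin m → ℕ)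
    (hprox : ∀ y : EuclideanSpace ℝ (Fin n),
      (1 / 2) * ‖x k - γ • v - x (k + 1)‖ ^ 2 + γ * g (x (k + 1)) ≤
        (1 / 2) * ‖x k - γ • v - y‖ ^ 2 + γ * g y)
    (xbar : EuclideanSpace ℝ (Fin n))
    (hdel : ∀ i, ‖x (k + 1) - x (k - (τi i : ℤ))‖ ≤
      ∑ d ∈ Finset.Icc (k - (τ : ℤ)) k, ‖x (d + 1) - x d‖) :
    ((∑ i, f i (x (k + 1))) + g (x (k + 1))) - ((∑ i, f i xbar) + g xbar) ≤
      (∑ i, L i) * (∑ d ∈ Finset.Icc (k - (τ : ℤ)) k, ‖x (d + 1) - x d‖) * ‖x (k + 1) - xbar‖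
      + (1 / γ) * ‖x (k + 1) - x k‖ * ‖x (k + 1) - xbar‖
      + ⟪(∑ i, gf i (x (k - (τi i : ℤ)))) - v, x (k + 1) - xbar⟫ := by
  set p := x (k + 1)
  set e := p - xbar
  set Δ := ∑ d ∈ Finset.Icc (k - (τ : ℤ)) k, ‖x (d + 1) - x d‖
  have hf : (∑ i, f i p) - ∑ i, f i xbar ≤ ⟪∑ i, gf i p, e⟫ :=
    hfconv.sub_le_inner_of_hasGradientAt (HasGradientAt.fun_sum fun i _ => hgrad i p) xbar
  have hg : g p - g xbar ≤ 1 / γ * ‖p - x k‖ * ‖e‖ - ⟪v, e⟫ := by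
    have hvar := hgconv.inner_sub_le_of_isMinOn_prox hγ.le (fun y _ => hprox y) xbar
    rw [← neg_sub p xbar, inner_neg_right, sub_right_comm, inner_sub_left,
      real_inner_smul_left] at hvar
    have hstep : ⟪x k - p, e⟫ ≤ ‖p - x k‖ * ‖e‖ := norm_sub_rev p (x k) ▸ real_inner_le_norm _ _
    rw [mul_assoc, div_mul_eq_mul_div, one_mul, le_sub_iff_add_le, le_div_iff₀ hγ]
    linarith
  have hdelay : ⟪∑ i, gf i p - ∑ i, gf i (x (k - (τi i : ℤ))), e⟫ ≤ (∑ i, L i) * Δ * ‖e‖ :=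
    (real_inner_le_norm _ _).trans <| mul_le_mul_of_nonneg_right
      (norm_sum_sub_sum_le_of_lipschitz (fun i _ => (hL i).le) (fun i _ => hlip i)
        (fun i _ => hdel i)) (norm_nonneg e)
  rw [inner_sub_left] at hdelay ⊢
  linarith

/-- Key estimate towards the sublinear-rate recursion: with `f = ∑ f_i` convex,
`∇f_i` being `L_i`-Lipschitz, `g` convex, `x^{k+1} = prox_{γ g}(x^k − γ v)`, `x̄` a
minimizer of `F = f + g`, and delayed points satisfying
`‖x^{k+1} − x^{k−τ_i}‖ ≤ ∑_{d=k−τ}^{k} ‖Δ^d‖`, one has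
`F(x^{k+1}) − F(x̄) ≤ L (∑_{d=k−τ}^{k} ‖Δ^d‖)‖x^{k+1}−x̄‖ + (1/γ)‖Δ^k‖‖x^{k+1}−x̄‖
  + ⟪∑_i ∇f_i(x^{k−τ_i}) − v, x^{k+1} − x̄⟫`. -/
theorem stmt_13 (n m : ℕ) (f : Fin m → EuclideanSpace ℝ (Fin n) → ℝ)
    (gf : Fin m → EuclideanSpace ℝ (Fin n) → EuclideanSpace ℝ (Fin n))
    (hgrad : ∀ i z, HasGradientAt (f i) (gf i z) z)
    (L : Fin m → ℝ) (hL : ∀ i, 0 < L i)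
    (hlip : ∀ i, ∀ a b : EuclideanSpace ℝ (Fin n), ‖gf i a - gf i b‖ ≤ L i * ‖a - b‖)
    (hfconv : ConvexOn ℝ Set.univ (fun z => ∑ i, f i z))
    (g : EuclideanSpace ℝ (Fin n) → ℝ) (hgconv : ConvexOn ℝ Set.univ g)
    (γ : ℝ) (hγ : 0 < γ) (v : EuclideanSpace ℝ (Fin n))
    (x : ℤ → EuclideanSpace ℝ (Fin n)) (k : ℤ) (τ : ℕ) (τi : Fin m → ℕ)
    (hprox : ∀ y : EuclideanSpace ℝ (Fin n),
      (1 / 2) * ‖x k - γ • v - x (k + 1)‖ ^ 2 + γ * g (x (k + 1)) ≤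
        (1 / 2) * ‖x k - γ • v - y‖ ^ 2 + γ * g y)
    (xbar : EuclideanSpace ℝ (Fin n))
    (hmin : ∀ y : EuclideanSpace ℝ (Fin n), (∑ i, f i xbar) + g xbar ≤ (∑ i, f i y) + g y)
    (hdel : ∀ i, ‖x (k + 1) - x (k - (τi i : ℤ))‖ ≤
      ∑ d ∈ Finset.Icc (k - (τ : ℤ)) k, ‖x (d + 1) - x d‖) :
    ((∑ i, f i (x (k + 1))) + g (x (k + 1))) - ((∑ i, f i xbar) + g xbar) ≤
      (∑ i, L i) * (∑ d ∈ Finset.Icc (k - (τ : ℤ)) k, ‖x (d + 1) - x d‖) * ‖x (k + 1) - xbar‖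
      + (1 / γ) * ‖x (k + 1) - x k‖ * ‖x (k + 1) - xbar‖
      + ⟪(∑ i, gf i (x (k - (τi i : ℤ)))) - v, x (k + 1) - xbar⟫ :=
  stmt_13_general n m f gf hgrad L hL hlip hfconv g hgconv γ hγ v x k τ τi hprox xbar hdel
end
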